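/- In an implicative aBE algebra, for all x, y, z: x → y = (z → x) → (x → y). -/

import Mathlib

class ImplicativeABE (X : Type*) where
  imp : X → X → X
  one : X
  one_imp : ∀ x, imp one x = x
  imp_one : ∀ x, imp x one = one
  imp_self : ∀ x, imp x x = one
  exch : ∀ x y z, imp x (imp y z) = imp y (imp x z)
  antisymm : ∀ x y, imp x y = one → imp y x = one → x = y
  implicative : ∀ x y, imp (imp x y) x = x

infixr:60 " ⮕ " => ImplicativeABE.imp
notation "𝟙" => ImplicativeABE.one

namespace ImplicativeABE

variable {X : Type*} [ImplicativeABE X]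

theorem imp_imp_imp_eq_imp (a b c : X) : (b ⮕ c) ⮕ (a ⮕ b) = a ⮕ b :=
  calc (b ⮕ c) ⮕ (a ⮕ b) = a ⮕ ((b ⮕ c) ⮕ b) := exch _ _ _
    _ = a ⮕ b := by rw [implicative]

theorem imp_eq_of_imp_eq {a b : X} (h : a ⮕ b = b) : b ⮕ a = a :=
  calc b ⮕ a = (a ⮕ b) ⮕ a := by rw [h]
    _ = a := implicative a b

end ImplicativeABE

theorem stmt2 {X : Type*} [ImplicativeABE X] (x y z : X) :
    x ⮕ y = (z ⮕ x) ⮕ (x ⮕ y) :=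
  (ImplicativeABE.imp_eq_of_imp_eq (ImplicativeABE.imp_imp_imp_eq_imp z x y)).symm
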